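/- The diagonal embedding of (ℤ[1/5])² into ℝ² × (ℚ₅)² (where each coordinate of ℤ[1/5] is sent to its image in ℝ and in the field ℚ₅ of 5-adic numbers) has discrete and cocompact image; that is, (ℤ[1/5])² is a cocompact lattice in ℝ² × (ℚ₅)². -/

import Mathlib

/-! Discreteness and cocompactness are split between the two places. An element of `ℤ[1/5]`
whose `5`-adic norm is at most `1` is an integer, so if it is also small in `ℝ` it is `0`.
Conversely every `5`-adic number lies within `1` of some `a / 5ⁿ` (truncate its expansion), and
adding an integer, which does not increase the `5`-adic distance, moves the real coordinate into
`[0, 1]`; hence `[0, 1]² × ℤ₅²` is a compact set meeting every coset. -/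

instance : Fact (Nat.Prime 5) := ⟨by norm_num⟩
def InZ5 (q : ℚ) : Prop := ∃ (a : ℤ) (n : ℕ), q = (a : ℚ) / 5 ^ n
noncomputable def diagZ5sq : AddSubgroup ((ℝ × ℝ) × (ℚ_[5] × ℚ_[5])) where
  carrier := {p | ∃ x y : ℚ, InZ5 x ∧ InZ5 y ∧
    p = (((x : ℝ), (y : ℝ)), ((x : ℚ_[5]), (y : ℚ_[5])))}
  zero_mem' := ⟨0, 0, ⟨0, 0, by norm_num⟩, ⟨0, 0, by norm_num⟩, by norm_num [Prod.ext_iff]⟩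
  add_mem' := by
    rintro p q ⟨x, y, ⟨a, n, ha⟩, ⟨b, m, hb⟩, rfl⟩ ⟨x', y', ⟨c, n', hc⟩, ⟨d, m', hd⟩, rfl⟩
    refine ⟨x + x', y + y', ⟨a * 5 ^ n' + c * 5 ^ n, n + n', ?_⟩,
      ⟨b * 5 ^ m' + d * 5 ^ m, m + m', ?_⟩, ?_⟩
    · rw [ha, hc]; push_cast; rw [pow_add]; field_simp
    · rw [hb, hd]; push_cast; rw [pow_add]; field_simp
    · push_cast; rfl
  neg_mem' := by
    rintro p ⟨x, y, ⟨a, n, ha⟩, ⟨b, m, hb⟩, rfl⟩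
    exact ⟨-x, -y, ⟨-a, n, by rw [ha]; push_cast; ring⟩,
      ⟨-b, m, by rw [hb]; push_cast; ring⟩, by push_cast; rfl⟩

theorem compactSpace_quotient_of_forall_exists_sub_mem {G : Type*} [AddGroup G]
    [TopologicalSpace G] (H : AddSubgroup G) {K : Set G} (hK : IsCompact K)
    (hH : ∀ g, ∃ h ∈ H, g - h ∈ K) : CompactSpace (G ⧸ H) := by
  have hKH : ((↑) : G → G ⧸ H) '' K = Set.univ := by
    refine Set.eq_univ_of_forall fun c => ?_
    obtain ⟨g, rfl⟩ := QuotientAddGroup.mk_surjective c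
    obtain ⟨h, hH, hgK⟩ := hH g
    exact ⟨g - h, hgK, QuotientAddGroup.eq.2 (by simpa using hH)⟩
  exact ⟨hKH ▸ hK.image continuous_quotient_mk'⟩

namespace Padic

variable {p : ℕ} [hp : Fact p.Prime]

theorem exists_norm_sub_natCast_div_pow_le_one (u : ℚ_[p]) :
    ∃ a n : ℕ, ‖u - a / (p : ℚ_[p]) ^ n‖ ≤ 1 := by
  obtain ⟨n, hn⟩ := pow_unbounded_of_one_lt ‖u‖ (Nat.one_lt_cast.2 hp.out.one_lt)
  have hpn : (0 : ℝ) < (p : ℝ) ^ n := pow_pos (Nat.cast_pos.2 hp.out.pos) n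
  have hnorm_pow : ‖(p : ℚ_[p]) ^ n‖ = ((p : ℝ) ^ n)⁻¹ := by simp
  let z : ℤ_[p] := ⟨p ^ n * u, by rw [norm_mul, hnorm_pow, inv_mul_le_one₀ hpn]; exact hn.le⟩
  have hz : ‖(p : ℚ_[p]) ^ n * u - z.appr n‖ ≤ (p : ℝ) ^ (-n : ℤ) := by
    simpa [PadicInt.norm_def] using
      (PadicInt.norm_le_pow_iff_mem_span_pow _ n).2 (z.appr_spec n)
  refine ⟨z.appr n, n, ?_⟩
  have hp' : (p : ℚ_[p]) ^ n ≠ 0 := pow_ne_zero _ (Nat.cast_ne_zero.2 hp.out.ne_zero)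
  rw [← mul_div_cancel_left₀ u hp', ← sub_div, norm_div, hnorm_pow, div_le_one (inv_pos.2 hpn)]
  simpa [zpow_neg] using hz

theorem pow_dvd_of_norm_intCast_div_pow_le_one {a : ℤ} {n : ℕ}
    (h : ‖(a : ℚ_[p]) / (p : ℚ_[p]) ^ n‖ ≤ 1) : (p ^ n : ℤ) ∣ a := by
  rwa [← norm_int_le_pow_iff_dvd, ← div_le_one (zpow_pos (Nat.cast_pos.2 hp.out.pos) _),
    ← norm_p_pow, ← norm_div]

end Padic

theorem exists_inZ5_sub_mem_Icc_and_norm_sub_le_one (r : ℝ) (u : ℚ_[5]) :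
    ∃ q : ℚ, InZ5 q ∧ r - q ∈ Set.Icc 0 1 ∧ ‖u - q‖ ≤ 1 := by
  obtain ⟨a, n, hu⟩ := Padic.exists_norm_sub_natCast_div_pow_le_one u
  obtain ⟨m, hm_le, hm_lt⟩ :
      ∃ m : ℤ, m ≤ r - (a / 5 ^ n : ℚ) ∧ r - (a / 5 ^ n : ℚ) < m + 1 :=
    ⟨_, Int.floor_le _, Int.lt_floor_add_one _⟩
  refine ⟨a / 5 ^ n + m, ⟨a + m * 5 ^ n, n, by field_simp; push_cast; ring⟩, ?_, ?_⟩
  · constructor <;> push_cast at * <;> linarith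
  · rw [show u - ((a / 5 ^ n + m : ℚ) : ℚ_[5]) = (u - a / 5 ^ n) + (-m : ℤ) by
      push_cast; ring]
    exact (IsUltrametricDist.norm_add_le_max _ _).trans
      (max_le (by simpa using hu) (Padic.norm_int_le_one _))

theorem InZ5.exists_eq_intCast_of_norm_le_one {q : ℚ} (hq : InZ5 q)
    (h : ‖(q : ℚ_[5])‖ ≤ 1) : ∃ b : ℤ, q = b := by
  obtain ⟨a, n, rfl⟩ := hq
  obtain ⟨b, rfl⟩ := Padic.pow_dvd_of_norm_intCast_div_pow_le_one (p := 5) (by simpa using h)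
  exact ⟨b, by push_cast; field_simp⟩

theorem InZ5.eq_zero_of_norm_lt_one {q : ℚ} (hq : InZ5 q) (hR : ‖(q : ℝ)‖ < 1)
    (h5 : ‖(q : ℚ_[5])‖ ≤ 1) : q = 0 := by
  obtain ⟨b, rfl⟩ := hq.exists_eq_intCast_of_norm_le_one h5
  rw [Real.norm_eq_abs] at hR
  exact_mod_cast Int.abs_lt_one_iff.1 (by exact_mod_cast hR)

theorem discreteTopology_diagZ5sq : DiscreteTopology diagZ5sq := by
  refine .of_forall_le_norm one_pos fun ⟨_, x, y, hx, hy, rfl⟩ hne => ?_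
  by_contra! hlt
  simp only [AddSubgroup.coe_norm, Prod.norm_def, max_lt_iff] at hlt
  obtain ⟨⟨hxR, hyR⟩, hx5, hy5⟩ := hlt
  apply hne
  simp [hx.eq_zero_of_norm_lt_one hxR hx5.le, hy.eq_zero_of_norm_lt_one hyR hy5.le]

theorem compactSpace_quotient_diagZ5sq :
    CompactSpace (((ℝ × ℝ) × (ℚ_[5] × ℚ_[5])) ⧸ diagZ5sq) := by
  have hK : IsCompact ((Set.Icc (0 : ℝ) 1 ×ˢ Set.Icc (0 : ℝ) 1) ×ˢ
      (Metric.closedBall (0 : ℚ_[5]) 1 ×ˢ Metric.closedBall (0 : ℚ_[5]) 1)) :=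
    (isCompact_Icc.prod isCompact_Icc).prod
      ((isCompact_closedBall _ _).prod (isCompact_closedBall _ _))
  refine compactSpace_quotient_of_forall_exists_sub_mem _ hK ?_
  rintro ⟨⟨r, s⟩, u, v⟩
  obtain ⟨x, hx, hrx, hux⟩ := exists_inZ5_sub_mem_Icc_and_norm_sub_le_one r u
  obtain ⟨y, hy, hsy, hvy⟩ := exists_inZ5_sub_mem_Icc_and_norm_sub_le_one s v
  exact ⟨_, ⟨x, y, hx, hy, rfl⟩, ⟨hrx, hsy⟩, by simpa using hux, by simpa using hvy⟩

/-- The diagonal embedding of `(ℤ[1/5])²` in `ℝ² × (ℚ₅)²` is a cocompact lattice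
embedding: its image is discrete and the quotient is compact. -/
theorem stmt4 :
    DiscreteTopology diagZ5sq ∧
      CompactSpace (((ℝ × ℝ) × (ℚ_[5] × ℚ_[5])) ⧸ diagZ5sq) :=
  ⟨discreteTopology_diagZ5sq, compactSpace_quotient_diagZ5sq⟩
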